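/- Let X ⊆ ℝⁿ, X_I ⊆ X, X_U ⊆ X, let f : ℝⁿ → ℝⁿ be a vector field, let B : ℝⁿ → ℝ be differentiable, and let ε > 0. Suppose there are real numbers b_U, b̄_I, and b̄₁, …, b̄_N together with sets Z₁, …, Z_N ⊆ ℝⁿ such that: (i) b_U ≤ B(x) for all x ∈ X_U; (ii) B(x) ≤ b̄_I for all x ∈ X_I; (iii) {x ∈ X : B(x) = 0} ⊆ Z₁ ∪ ⋯ ∪ Z_N; and (iv) L_f B(x) ≤ b̄ᵢ for all x ∈ Zᵢ and all i ∈ {1,…,N}. If the set-based loss L = max(0, −b_U + ε) + max(0, b̄_I) + Σᵢ₌₁ᴺ max(0, b̄ᵢ + ε) equals 0, then the system ẋ = f(x) is safe: for every T ≥ 0 and every trajectory x : [0,T] → ℝⁿ of ẋ = f(x) with x(t) ∈ X for all t ∈ [0,T] and x(0) ∈ X_I, we have x(t) ∉ X_U for all t ∈ [0,T]. -/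

import Mathlib

/-!
A zero loss forces `ε ≤ b_U`, `b̄_I ≤ 0` and `b̄ᵢ ≤ -ε` for every `i`. Then `B ≤ 0` on `X_I`, and
`L_f B < 0` wherever `B` vanishes in `X`, so along a trajectory staying in `X` the function
`t ↦ B (x t)` starts nonpositive and can never cross zero upwards (fencing theorem). Hence
`B (x t) ≤ 0 < ε ≤ b_U`, and `x t` cannot lie in `X_U`.
-/

open Set

theorem bounds_of_setBasedLoss_eq_zero {ι : Type*} [Fintype ι] {ε bU bI : ℝ} {bbar : ι → ℝ}
    (hloss : max 0 (-bU + ε) + max 0 bI + ∑ i, max 0 (bbar i + ε) = 0) :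
    ε ≤ bU ∧ bI ≤ 0 ∧ ∀ i, bbar i ≤ -ε := by
  have hnonneg (a : ℝ) : 0 ≤ max 0 a := le_max_left _ _
  have hle (a : ℝ) : a ≤ max 0 a := le_max_right _ _
  have hsum_nonneg : 0 ≤ ∑ i, max 0 (bbar i + ε) := Finset.sum_nonneg fun i _ => hnonneg _
  refine ⟨?_, ?_, fun i => ?_⟩
  · linarith [hle (-bU + ε), hnonneg bI]
  · linarith [hle bI, hnonneg (-bU + ε)]
  · have hterm : max 0 (bbar i + ε) ≤ ∑ j, max 0 (bbar j + ε) :=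
      Finset.single_le_sum (fun j _ => hnonneg (bbar j + ε)) (Finset.mem_univ i)
    linarith [hle (bbar i + ε), hnonneg (-bU + ε), hnonneg bI]

theorem HasGradientAt.comp_hasDerivAt {F : Type*} [NormedAddCommGroup F] [InnerProductSpace ℝ F]
    [CompleteSpace F] {B : F → ℝ} {B' : F} {x : ℝ → F} {x' : F} {t : ℝ}
    (hB : HasGradientAt B B' (x t)) (hx : HasDerivAt x x' t) :
    HasDerivAt (B ∘ x) (inner ℝ B' x') t :=
  hB.hasFDerivAt.comp_hasDerivAt t hx

theorem barrier_nonpos_of_lie_deriv_neg {F : Type*} [NormedAddCommGroup F]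
    [InnerProductSpace ℝ F] [CompleteSpace F] {X : Set F} {f : F → F} {B : F → ℝ}
    (hB : Differentiable ℝ B) (hlie : ∀ y ∈ X, B y = 0 → inner ℝ (gradient B y) (f y) < 0)
    {T : ℝ} {x : ℝ → F} (hx : ∀ t ∈ Icc 0 T, HasDerivAt x (f (x t)) t)
    (hxX : ∀ t ∈ Icc 0 T, x t ∈ X) (hx0 : B (x 0) ≤ 0) :
    ∀ t ∈ Icc 0 T, B (x t) ≤ 0 := by
  have hderiv (t : ℝ) (ht : t ∈ Icc 0 T) :
      HasDerivAt (B ∘ x) (inner ℝ (gradient B (x t)) (f (x t))) t :=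
    (hB (x t)).hasGradientAt.comp_hasDerivAt (hx t ht)
  exact image_le_of_deriv_right_lt_deriv_boundary (B' := fun _ => 0)
    (fun t ht => (hderiv t ht).continuousAt.continuousWithinAt)
    (fun t ht => (hderiv t (Ico_subset_Icc_self ht)).hasDerivWithinAt) hx0
    (fun _ => hasDerivAt_const _ _)
    (fun t ht hzero => hlie _ (hxX t (Ico_subset_Icc_self ht)) hzero)

theorem set_based_loss_soundness_general {n N : ℕ}
    (X XI XU : Set (EuclideanSpace ℝ (Fin n)))
    (f : EuclideanSpace ℝ (Fin n) → EuclideanSpace ℝ (Fin n))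
    (B : EuclideanSpace ℝ (Fin n) → ℝ) (hB : Differentiable ℝ B)
    (ε : ℝ) (hε : 0 < ε)
    (bU bI : ℝ) (bbar : Fin N → ℝ) (Z : Fin N → Set (EuclideanSpace ℝ (Fin n)))
    (hbU : ∀ x ∈ XU, bU ≤ B x)
    (hbI : ∀ x ∈ XI, B x ≤ bI)
    (hcover : {x ∈ X | B x = 0} ⊆ ⋃ i, Z i)
    (hbbar : ∀ i : Fin N, ∀ x ∈ Z i, (inner ℝ (gradient B x) (f x) : ℝ) ≤ bbar i)
    (hloss : max 0 (-bU + ε) + max 0 bI + ∑ i, max 0 (bbar i + ε) = 0) :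
    ∀ (T : ℝ), 0 ≤ T → ∀ x : ℝ → EuclideanSpace ℝ (Fin n),
      (∀ t ∈ Icc 0 T, HasDerivAt x (f (x t)) t) →
      (∀ t ∈ Icc 0 T, x t ∈ X) →
      x 0 ∈ XI →
      ∀ t ∈ Icc 0 T, x t ∉ XU := by
  obtain ⟨hεbU, hbI_nonpos, hbbar_le⟩ := bounds_of_setBasedLoss_eq_zero hloss
  have hlie (y : EuclideanSpace ℝ (Fin n)) (hyX : y ∈ X) (hy : B y = 0) :
      inner ℝ (gradient B y) (f y) < 0 := by
    obtain ⟨i, hi⟩ := mem_iUnion.mp (hcover ⟨hyX, hy⟩)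
    linarith [hbbar i y hi, hbbar_le i]
  intro T _ x hx hxX hx0 t ht hxU
  have hBx := barrier_nonpos_of_lie_deriv_neg hB hlie hx hxX
    ((hbI _ hx0).trans hbI_nonpos) t ht
  linarith [hbU _ hxU]

/-- **Soundness of the set-based loss.**
If the set-based loss
`max(0, −b_U + ε) + max(0, b̄_I) + ∑ i, max(0, b̄ i + ε)` is zero, where
`b_U` is a lower bound of `B` on the unsafe set, `b̄_I` an upper bound of `B`
on the initial set, the sets `Z i` cover the zero-level set of `B` in `X`, and
`b̄ i` bounds the Lie derivative `⟪∇B(x), f(x)⟫` on `Z i`, then the system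
`ẋ = f(x)` is safe. -/
theorem set_based_loss_soundness {n N : ℕ}
    (X XI XU : Set (EuclideanSpace ℝ (Fin n)))
    (hXI : XI ⊆ X) (hXU : XU ⊆ X)
    (f : EuclideanSpace ℝ (Fin n) → EuclideanSpace ℝ (Fin n))
    (B : EuclideanSpace ℝ (Fin n) → ℝ) (hB : Differentiable ℝ B)
    (ε : ℝ) (hε : 0 < ε)
    (bU bI : ℝ) (bbar : Fin N → ℝ) (Z : Fin N → Set (EuclideanSpace ℝ (Fin n)))
    (hbU : ∀ x ∈ XU, bU ≤ B x)
    (hbI : ∀ x ∈ XI, B x ≤ bI)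
    (hcover : {x ∈ X | B x = 0} ⊆ ⋃ i, Z i)
    (hbbar : ∀ i : Fin N, ∀ x ∈ Z i, (inner ℝ (gradient B x) (f x) : ℝ) ≤ bbar i)
    (hloss : max 0 (-bU + ε) + max 0 bI + ∑ i, max 0 (bbar i + ε) = 0) :
    ∀ (T : ℝ), 0 ≤ T → ∀ x : ℝ → EuclideanSpace ℝ (Fin n),
      (∀ t ∈ Icc 0 T, HasDerivAt x (f (x t)) t) →
      (∀ t ∈ Icc 0 T, x t ∈ X) →
      x 0 ∈ XI →
      ∀ t ∈ Icc 0 T, x t ∉ XU :=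
  set_based_loss_soundness_general X XI XU f B hB ε hε bU bI bbar Z hbU hbI hcover hbbar hloss
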